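/- arXiv:2303.09510 — 2 statements merged into one kernel-verified Lean document; each statement's English description precedes it below -/
import Mathlib

section
/- Let ξ > 0 be real and T ≥ 100. Then the vertical-line integral I₃ := -(1/(2πi)) ∫_{-1+i}^{-1+iT} (ζ'/ζ)(s) ξ^{-s} 𝒳(1-s) ds satisfies I₃ ≪_ξ 1, with implied constant depending only on ξ. In particular, using the bounds 𝒳(2-it) ≪ t^{-3/2} and (ζ'/ζ)(-1+it) ≪ log(2t) for 1 ≤ t ≤ T, one has I₃ ≪ ξ^{-1} ∫₁^T t^{-3/2} log(2t) dt ≪_ξ 1. -/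
open Complex Filter Asymptotics Set
open Metric

noncomputable section

/-- `X1 s` represents `𝒳(1-s) = 2 (2π)^{-s} Γ(s) cos(π s/2)`, where `𝒳` is the factor in the
functional equation `ζ(s) = 𝒳(s) ζ(1-s)` of the Riemann zeta function. -/
def X1 (s : ℂ) : ℂ :=
  2 * (2 * (Real.pi : ℂ)) ^ (-s) * Complex.Gamma s * Complex.cos ((Real.pi : ℂ) * s / 2)

/-- `e u = exp(2πiu)`. -/
def e (u : ℝ) : ℂ := Complex.exp (2 * Real.pi * Complex.I * u)

open scoped Classical in
/-- The multiplicity of `ρ` as a zero of the Riemann zeta function. -/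
def zetaMult (ρ : ℂ) : ℕ :=
  if h : AnalyticAt ℂ riemannZeta ρ then (analyticOrderAt riemannZeta ρ).toNat else 0

/-- The Riemann Hypothesis: every zero of `ζ` with positive real part lies on `Re s = 1/2`. -/
def RH : Prop := ∀ s : ℂ, riemannZeta s = 0 → 0 < s.re → s.re = 1 / 2

/-- The Generalized Riemann Hypothesis for all Dirichlet L-functions. -/
def GRH : Prop := ∀ (q : ℕ) [NeZero q] (χ : DirichletCharacter ℂ q) (s : ℂ),
  DirichletCharacter.LFunction χ s = 0 → 0 < s.re → s.re = 1 / 2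

/-- `B : ℝ → ℂ` is smooth with compact support contained in `(0,∞)`. -/
def NiceTest (B : ℝ → ℂ) : Prop :=
  ContDiff ℝ (⊤ : ℕ∞) B ∧ HasCompactSupport B ∧ tsupport B ⊆ Set.Ioi 0

/-- `C_B = ∫₀^∞ B(u) du`. -/
def CB (B : ℝ → ℂ) : ℂ := ∫ u in Set.Ioi (0:ℝ), B u


lemma gamma_prod (t : ℝ) (ht : 0 < t) :
    Complex.Gamma (1 + t*I) * Complex.Gamma (1 - t*I)
      = ((Real.pi * t / Real.sinh (Real.pi * t) : ℝ) : ℂ) := by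
  have htI : (t:ℂ) * I ≠ 0 := by
    simp [Complex.ext_iff, ht.ne']
  have h1 : Complex.Gamma (1 + t*I) = (t:ℂ)*I * Complex.Gamma ((t:ℂ)*I) := by
    rw [← Complex.Gamma_add_one _ htI]; ring_nf
  have h2 : Complex.Gamma ((t:ℂ)*I) * Complex.Gamma (1 - (t:ℂ)*I)
      = (Real.pi : ℂ) / Complex.sin ((Real.pi:ℂ) * ((t:ℂ)*I)) :=
    Complex.Gamma_mul_Gamma_one_sub _
  have h3 : Complex.sin ((Real.pi:ℂ) * ((t:ℂ)*I)) = (Real.sinh (Real.pi*t) : ℝ) * I := by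
    have : (Real.pi:ℂ) * ((t:ℂ)*I) = ((Real.pi*t : ℝ):ℂ) * I := by push_cast; ring
    rw [this, Complex.sin_mul_I, Complex.ofReal_sinh]
  have hsh : Real.sinh (Real.pi * t) ≠ 0 := by positivity
  have hshc : ((Real.sinh (Real.pi*t) : ℝ) : ℂ) ≠ 0 := by exact_mod_cast hsh
  calc Complex.Gamma (1 + t*I) * Complex.Gamma (1 - t*I)
      = (t:ℂ)*I * (Complex.Gamma ((t:ℂ)*I) * Complex.Gamma (1 - (t:ℂ)*I)) := by
        rw [h1]; ring
    _ = (t:ℂ)*I * ((Real.pi : ℂ) / ((Real.sinh (Real.pi*t) : ℝ) * I)) := by rw [h2, h3]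
    _ = (((Real.pi * t:ℝ):ℂ) * I) / (((Real.sinh (Real.pi*t) : ℝ):ℂ) * I) := by
        push_cast [mul_div_assoc]; ring
    _ = ((Real.pi * t :ℝ):ℂ) / ((Real.sinh (Real.pi*t) : ℝ):ℂ) := by
        rw [mul_div_mul_right _ _ Complex.I_ne_zero]
    _ = ((Real.pi * t / Real.sinh (Real.pi * t) : ℝ) : ℂ) := by
        rw [Complex.ofReal_div]

lemma gamma_norm_sq (t : ℝ) (ht : 0 < t) :
    ‖Complex.Gamma (1 + t*I)‖^2 = Real.pi * t / Real.sinh (Real.pi * t) := by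
  have hc : Complex.Gamma (1 - t*I) = (starRingEnd ℂ) (Complex.Gamma (1 + t*I)) := by
    rw [← Complex.Gamma_conj]
    congr 1
    simp [Complex.ext_iff]
  have h := gamma_prod t ht
  rw [hc, Complex.mul_conj'] at h
  exact_mod_cast h


lemma gamma_cosh_lower (t : ℝ) (ht : 1 ≤ t) :
    t ^ ((3:ℝ)/2) / 2 ≤ ‖Complex.Gamma (2 - t*I)‖ * Real.cosh (Real.pi*t/2) := by
  have ht0 : (0:ℝ) < t := lt_of_lt_of_le one_pos ht
  -- ‖Γ(2-ti)‖ = ‖1-ti‖ * ‖Γ(1-ti)‖ and ‖Γ(1-ti)‖ = ‖Γ(1+ti)‖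
  have h1 : Complex.Gamma (2 - t*I) = (1 - t*I) * Complex.Gamma (1 - t*I) := by
    have hne : (1:ℂ) - t*I ≠ 0 := by
      simp [Complex.ext_iff]
    have := Complex.Gamma_add_one _ hne
    rw [← this]; ring_nf
  have hconjnorm : ‖Complex.Gamma (1 - t*I)‖ = ‖Complex.Gamma (1 + t*I)‖ := by
    have hc : Complex.Gamma (1 - t*I) = (starRingEnd ℂ) (Complex.Gamma (1 + t*I)) := by
      rw [← Complex.Gamma_conj]; congr 1; simp [Complex.ext_iff]
    rw [hc, RCLike.norm_conj]
  have habs : t ≤ ‖(1:ℂ) - t*I‖ := by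
    have := Complex.abs_im_le_norm (1 - t*I)
    simp only [Complex.sub_im, Complex.one_im, Complex.mul_im, Complex.ofReal_re,
      Complex.I_im, Complex.ofReal_im, Complex.I_re] at this
    calc t = |(0 - (t * 1 + 0 * 0))| := by rw [abs_of_nonpos (by nlinarith)]; ring
    _ ≤ _ := this
  -- lower bound for ‖Γ(1+ti)‖
  have hsq : ‖Complex.Gamma (1 + t*I)‖^2 = Real.pi * t / Real.sinh (Real.pi * t) :=
    gamma_norm_sq t ht0
  have hsinh_le : Real.sinh (Real.pi*t) ≤ Real.exp (Real.pi*t) / 2 := by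
    rw [Real.sinh_eq]
    have : 0 < Real.exp (-(Real.pi*t)) := Real.exp_pos _
    linarith
  have hsinh_pos : 0 < Real.sinh (Real.pi*t) := by positivity
  have hlow : 2 * Real.pi * t * Real.exp (-(Real.pi*t)) ≤ ‖Complex.Gamma (1 + t*I)‖^2 := by
    rw [hsq, le_div_iff₀ hsinh_pos]
    have h2 : Real.exp (-(Real.pi*t)) * Real.exp (Real.pi*t) = 1 := by
      rw [← Real.exp_add]; simp
    nlinarith [mul_le_mul_of_nonneg_left hsinh_le
      (by positivity : (0:ℝ) ≤ 2*Real.pi*t*Real.exp (-(Real.pi*t))),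
      mul_le_mul_of_nonneg_left h2.le (by positivity : (0:ℝ) ≤ Real.pi*t),
      mul_le_mul_of_nonneg_left h2.ge (by positivity : (0:ℝ) ≤ Real.pi*t)]
  have hsqrt : Real.sqrt (2 * Real.pi * t) * Real.exp (-(Real.pi*t)/2)
      ≤ ‖Complex.Gamma (1 + t*I)‖ := by
    have h2 : Real.exp (-(Real.pi*t)) = (Real.exp (-(Real.pi*t)/2))^2 := by
      rw [sq, ← Real.exp_add]; congr 1; ring
    have : Real.sqrt (2 * Real.pi * t * Real.exp (-(Real.pi*t)))
        = Real.sqrt (2*Real.pi*t) * Real.exp (-(Real.pi*t)/2) := by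
      rw [Real.sqrt_mul (by positivity), h2, Real.sqrt_sq (by positivity)]
    calc Real.sqrt (2 * Real.pi * t) * Real.exp (-(Real.pi*t)/2)
        = Real.sqrt (2 * Real.pi * t * Real.exp (-(Real.pi*t))) := this.symm
      _ ≤ Real.sqrt (‖Complex.Gamma (1 + t*I)‖^2) := Real.sqrt_le_sqrt hlow
      _ = ‖Complex.Gamma (1 + t*I)‖ := Real.sqrt_sq (norm_nonneg _)
  have hcosh : Real.exp (Real.pi*t/2) / 2 ≤ Real.cosh (Real.pi*t/2) := by
    rw [Real.cosh_eq]
    have : 0 < Real.exp (-(Real.pi*t/2)) := Real.exp_pos _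
    linarith
  have hsqrt2 : Real.sqrt t ≤ Real.sqrt (2*Real.pi*t) := by
    apply Real.sqrt_le_sqrt
    nlinarith [Real.pi_gt_three]
  have hee : Real.exp (-(Real.pi*t)/2) * Real.exp (Real.pi*t/2) = 1 := by
    rw [← Real.exp_add, show -(Real.pi*t)/2 + Real.pi*t/2 = 0 from by ring, Real.exp_zero]
  have hrw : t ^ ((3:ℝ)/2) = t * Real.sqrt t := by
    rw [Real.sqrt_eq_rpow, show (3:ℝ)/2 = 1 + 1/2 from by norm_num, Real.rpow_add ht0,
      Real.rpow_one]
  calc t ^ ((3:ℝ)/2) / 2 = t * Real.sqrt t * (1/2) := by rw [hrw]; ring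
    _ ≤ t * Real.sqrt (2*Real.pi*t) * (1/2) :=
        mul_le_mul_of_nonneg_right (mul_le_mul_of_nonneg_left hsqrt2 ht0.le) (by norm_num)
    _ = (t * (Real.sqrt (2*Real.pi*t) * Real.exp (-(Real.pi*t)/2))) * (Real.exp (Real.pi*t/2)/2) := by
        rw [show (t * (Real.sqrt (2*Real.pi*t) * Real.exp (-(Real.pi*t)/2))) * (Real.exp (Real.pi*t/2)/2)
          = t * Real.sqrt (2*Real.pi*t) * (Real.exp (-(Real.pi*t)/2) * Real.exp (Real.pi*t/2)) * (1/2) from by ring, hee]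
        ring
    _ ≤ (t * ‖Complex.Gamma (1 + t*I)‖) * (Real.exp (Real.pi*t/2)/2) := by
        have := mul_le_mul_of_nonneg_left hsqrt (le_of_lt ht0)
        apply mul_le_mul_of_nonneg_right this (by positivity)
    _ ≤ ‖Complex.Gamma (2 - t*I)‖ * Real.cosh (Real.pi*t/2) := by
        rw [h1, norm_mul, hconjnorm]
        have hg : (0:ℝ) ≤ ‖Complex.Gamma (1 + t*I)‖ := norm_nonneg _
        have := mul_le_mul_of_nonneg_right habs hg
        apply mul_le_mul
        · exact this
        · exact hcosh
        · positivity
        · positivity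


lemma sin_ne_zero_of_im (s : ℂ) (hs : s.im ≠ 0) : Complex.sin ((Real.pi:ℂ) * s) ≠ 0 := by
  intro h
  rw [Complex.sin_eq_zero_iff] at h
  obtain ⟨k, hk⟩ := h
  have : s = (k:ℂ) := by
    have hpi : (Real.pi:ℂ) ≠ 0 := by
      exact_mod_cast Real.pi_ne_zero
    apply mul_left_cancel₀ hpi
    rw [hk]; ring
  apply hs
  rw [this]
  simp

lemma sin_pi_half (t : ℝ) :
    Complex.sin ((Real.pi:ℂ) * (-1 + t*I) / 2) = -((Real.cosh (Real.pi*t/2) : ℝ) : ℂ) := by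
  have h : (Real.pi:ℂ) * (-1 + t*I) / 2 = ((Real.pi*t/2 : ℝ):ℂ) * I - (Real.pi:ℂ)/2 := by
    push_cast; ring
  rw [h, Complex.sin_sub, Complex.sin_pi_div_two, Complex.cos_pi_div_two,
    Complex.cos_mul_I, Complex.ofReal_cosh]
  ring

lemma X1_norm_eq (t : ℝ) (ht : 1 ≤ t) :
    ‖X1 (-1 + t*I)‖ * (‖Complex.Gamma (2 - t*I)‖ * Real.cosh (Real.pi*t/2))
      = 2 * Real.pi ^ 2 := by
  set s : ℂ := -1 + t*I with hs
  have him' : s.im = t := by rw [hs]; simp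
  have him : s.im ≠ 0 := by rw [him']; intro h; rw [h] at ht; linarith
  have h1s : (1:ℂ) - s = 2 - t*I := by rw [hs]; ring
  have hrefl : Complex.Gamma s * Complex.Gamma (1 - s)
      = (Real.pi:ℂ) / Complex.sin ((Real.pi:ℂ) * s) := Complex.Gamma_mul_Gamma_one_sub s
  have hsin2 : Complex.sin ((Real.pi:ℂ) * s)
      = 2 * Complex.sin ((Real.pi:ℂ)*s/2) * Complex.cos ((Real.pi:ℂ)*s/2) := by
    have h := Complex.sin_two_mul ((Real.pi:ℂ)*s/2)
    rw [show 2*((Real.pi:ℂ)*s/2) = (Real.pi:ℂ)*s from by ring] at h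
    exact h
  have hsne : Complex.sin ((Real.pi:ℂ) * s) ≠ 0 := sin_ne_zero_of_im s him
  -- key algebraic identity
  have hkey : X1 s * (Complex.Gamma (1 - s) * Complex.sin ((Real.pi:ℂ)*s/2))
      = (Real.pi:ℂ) * (2 * (Real.pi:ℂ))^(-s) := by
    have : X1 s * (Complex.Gamma (1 - s) * Complex.sin ((Real.pi:ℂ)*s/2))
        = (2 * (Real.pi:ℂ))^(-s) * ((Complex.Gamma s * Complex.Gamma (1-s)) *
            (2 * Complex.sin ((Real.pi:ℂ)*s/2) * Complex.cos ((Real.pi:ℂ)*s/2))) := by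
      rw [X1]; ring
    rw [this, hrefl, ← hsin2, div_mul_cancel₀ _ hsne]
    ring
  -- take norms
  have hnorm := congrArg (fun z => ‖z‖) hkey
  simp only [norm_mul] at hnorm
  have h2pi : ((2:ℂ) * (Real.pi:ℂ)) = ((2*Real.pi : ℝ):ℂ) := by push_cast; ring
  have hres : (-s).re = 1 := by simp [hs]
  have hcpow : ‖((2:ℂ) * (Real.pi:ℂ))^(-s)‖ = 2*Real.pi := by
    rw [h2pi, Complex.norm_cpow_eq_rpow_re_of_pos (by positivity), hres,
      Real.rpow_one]
  have hsin : ‖Complex.sin ((Real.pi:ℂ)*s/2)‖ = Real.cosh (Real.pi*t/2) := by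
    rw [hs, sin_pi_half, norm_neg, Complex.norm_real, Real.norm_eq_abs,
      abs_of_pos (Real.cosh_pos _)]
  have hpi : ‖(Real.pi:ℂ)‖ = Real.pi := by
    rw [Complex.norm_real, Real.norm_eq_abs, abs_of_pos Real.pi_pos]
  rw [hsin, hpi, hcpow, h1s] at hnorm
  rw [hnorm]; ring



lemma X1_norm_le (t : ℝ) (ht : 1 ≤ t) :
    ‖X1 (-1 + t*I)‖ ≤ 4*Real.pi^2 * t^(-((3:ℝ)/2)) := by
  have ht0 : (0:ℝ) < t := lt_of_lt_of_le one_pos ht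
  have hpow : (0:ℝ) < t ^ ((3:ℝ)/2) := Real.rpow_pos_of_pos ht0 _
  have hle := gamma_cosh_lower t ht
  have heq := X1_norm_eq t ht
  have hD : (0:ℝ) < ‖Complex.Gamma (2 - t*I)‖ * Real.cosh (Real.pi*t/2) :=
    lt_of_lt_of_le (by positivity) hle
  have hX : ‖X1 (-1 + t*I)‖
      = 2*Real.pi^2 / (‖Complex.Gamma (2 - t*I)‖ * Real.cosh (Real.pi*t/2)) :=
    (eq_div_iff hD.ne').mpr heq
  rw [hX, Real.rpow_neg ht0.le]
  calc 2*Real.pi^2 / (‖Complex.Gamma (2 - t*I)‖ * Real.cosh (Real.pi*t/2))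
      ≤ 2*Real.pi^2 / (t ^ ((3:ℝ)/2) / 2) :=
        div_le_div_of_nonneg_left (by positivity) (by positivity) hle
    _ = 4*Real.pi^2 * (t ^ ((3:ℝ)/2))⁻¹ := by field_simp; ring

-- zeta upper bound for re ≥ 3/2
def Zc : ℝ := ∑' n : ℕ, ((n:ℝ)+1) ^ (-((3:ℝ)/2))

lemma summable_32 : Summable (fun n : ℕ => ((n:ℝ)+1) ^ (-((3:ℝ)/2))) := by
  have h : Summable (fun n : ℕ => 1 / (n:ℝ) ^ ((3:ℝ)/2)) :=
    Real.summable_one_div_nat_rpow.mpr (by norm_num)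
  have h2 := (summable_nat_add_iff 1).mpr h
  apply h2.congr
  intro n
  rw [one_div, ← Real.rpow_neg (by positivity)]
  push_cast
  ring_nf

lemma Zc_nonneg : 0 ≤ Zc := tsum_nonneg (fun n => Real.rpow_nonneg (by positivity) _)

lemma norm_term_le (w : ℂ) (hw : (3:ℝ)/2 ≤ w.re) (n : ℕ) :
    ‖1 / ((n:ℂ)+1) ^ w‖ ≤ ((n:ℝ)+1) ^ (-((3:ℝ)/2)) := by
  have hpos : (0:ℝ) < (n:ℝ)+1 := by positivity
  have hcast : ((n:ℂ)+1) = (((n:ℝ)+1 : ℝ):ℂ) := by push_cast; ring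
  rw [norm_div, norm_one, hcast,
    Complex.norm_cpow_eq_rpow_re_of_pos hpos, one_div, ← Real.rpow_neg hpos.le]
  exact Real.rpow_le_rpow_of_exponent_le (by simp) (by linarith)

lemma zeta_norm_le (w : ℂ) (hw : (3:ℝ)/2 ≤ w.re) : ‖riemannZeta w‖ ≤ Zc := by
  rw [zeta_eq_tsum_one_div_nat_add_one_cpow (by linarith : 1 < w.re)]
  have hsum : Summable (fun n : ℕ => ‖1 / ((n:ℂ)+1) ^ w‖) :=
    Summable.of_nonneg_of_le (fun n => norm_nonneg _) (norm_term_le w hw) summable_32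
  calc ‖∑' n : ℕ, 1 / ((n:ℂ)+1) ^ w‖ ≤ ∑' n : ℕ, ‖1 / ((n:ℂ)+1) ^ w‖ :=
        norm_tsum_le_tsum_norm hsum
    _ ≤ Zc := Summable.tsum_le_tsum (norm_term_le w hw) hsum summable_32


lemma partial_sum_le : ∀ N : ℕ, (∑ i ∈ Finset.range N, 1/((i:ℝ)+2)^2) ≤ 3/4 := by
  have key : ∀ N : ℕ, 1 ≤ N → (∑ i ∈ Finset.range N, 1/((i:ℝ)+2)^2) ≤ 3/4 - 1/((N:ℝ)+1) := by
    intro N hN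
    induction N, hN using Nat.le_induction with
    | base => simp [Finset.sum_range_one]; norm_num
    | succ n hn ih =>
      rw [Finset.sum_range_succ]
      have h1 : 1/((n:ℝ)+2)^2 ≤ 1/((n:ℝ)+1) - 1/((n:ℝ)+2) := by
        have hn1 : (0:ℝ) < (n:ℝ)+1 := by positivity
        have hn2 : (0:ℝ) < (n:ℝ)+2 := by positivity
        rw [div_sub_div _ _ hn1.ne' hn2.ne', div_le_div_iff₀ (by positivity) (by positivity)]
        ring_nf
        nlinarith
      push_cast
      rw [show ((n:ℝ)+1+1) = (n:ℝ)+2 from by ring]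
      linarith
  intro N
  rcases Nat.eq_zero_or_pos N with h | h
  · simp [h]; norm_num
  · have := key N h
    have h1 : (0:ℝ) < (N:ℝ)+1 := by positivity
    have : (0:ℝ) ≤ 1/((N:ℝ)+1) := by positivity
    linarith [key N h]

lemma tsum_plus2_le : (∑' n : ℕ, ((n:ℝ)+2) ^ (-(2:ℝ))) ≤ 3/4 := by
  have heq : ∀ n : ℕ, ((n:ℝ)+2) ^ (-(2:ℝ)) = 1/((n:ℝ)+2)^2 := by
    intro n
    rw [Real.rpow_neg (by positivity), one_div, show ((2:ℝ)) = ((2:ℕ):ℝ) from by norm_num,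
      Real.rpow_natCast]
  calc (∑' n : ℕ, ((n:ℝ)+2) ^ (-(2:ℝ))) = ∑' n : ℕ, 1/((n:ℝ)+2)^2 := by
        exact tsum_congr heq
    _ ≤ 3/4 := Real.tsum_le_of_sum_range_le (fun n => by positivity) partial_sum_le

lemma summable_plus2 : Summable (fun n : ℕ => ((n:ℝ)+2) ^ (-(2:ℝ))) := by
  have h : Summable (fun n : ℕ => 1 / (n:ℝ) ^ ((2:ℝ))) :=
    Real.summable_one_div_nat_rpow.mpr (by norm_num)
  have h2 := (summable_nat_add_iff 2).mpr h
  apply h2.congr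
  intro n
  rw [one_div, ← Real.rpow_neg (by positivity)]
  push_cast
  ring_nf

lemma zeta_lower (w : ℂ) (hw : w.re = 2) : (1/4 : ℝ) ≤ ‖riemannZeta w‖ := by
  have hw1 : 1 < w.re := by rw [hw]; norm_num
  have hterm : ∀ n : ℕ, ‖1 / ((n:ℂ)+1+1) ^ w‖ ≤ ((n:ℝ)+2) ^ (-(2:ℝ)) := by
    intro n
    have hpos : (0:ℝ) < (n:ℝ)+2 := by positivity
    have hcast : ((n:ℂ)+1+1) = (((n:ℝ)+2 : ℝ):ℂ) := by push_cast; ring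
    rw [norm_div, norm_one, hcast,
      Complex.norm_cpow_eq_rpow_re_of_pos hpos, hw, one_div, ← Real.rpow_neg hpos.le]
  have hnsum : Summable (fun n : ℕ => ‖1 / ((n:ℂ)+1+1) ^ w‖) :=
    Summable.of_nonneg_of_le (fun n => norm_nonneg _) hterm summable_plus2
  have hs1 : Summable (fun n : ℕ => ((n:ℝ)+1) ^ (-(2:ℝ))) := by
    have h : Summable (fun n : ℕ => 1 / (n:ℝ) ^ ((2:ℝ))) :=
      Real.summable_one_div_nat_rpow.mpr (by norm_num)
    have h2 := (summable_nat_add_iff 1).mpr h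
    apply h2.congr
    intro n
    rw [one_div, ← Real.rpow_neg (by positivity)]
    push_cast
    ring_nf
  have hsumc : Summable (fun n : ℕ => 1 / ((n:ℂ)+1) ^ w) := by
    apply Summable.of_norm
    apply Summable.of_nonneg_of_le (fun n => norm_nonneg _) _ hs1
    intro n
    have hpos : (0:ℝ) < (n:ℝ)+1 := by positivity
    have hcast : ((n:ℂ)+1) = (((n:ℝ)+1 : ℝ):ℂ) := by push_cast; ring
    rw [norm_div, norm_one, hcast,
      Complex.norm_cpow_eq_rpow_re_of_pos hpos, hw, one_div, ← Real.rpow_neg hpos.le]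
  have hzeta : riemannZeta w = 1 + ∑' n : ℕ, 1 / ((n:ℂ)+1+1) ^ w := by
    rw [zeta_eq_tsum_one_div_nat_add_one_cpow hw1, Summable.tsum_eq_zero_add hsumc]
    congr 1
    · norm_num
    · apply tsum_congr; intro n; push_cast; ring_nf
  have hbound : ‖riemannZeta w - 1‖ ≤ 3/4 := by
    rw [hzeta]
    simp only [add_sub_cancel_left]
    calc ‖∑' n : ℕ, 1 / ((n:ℂ)+1+1) ^ w‖ ≤ ∑' n : ℕ, ‖1 / ((n:ℂ)+1+1) ^ w‖ :=
          norm_tsum_le_tsum_norm hnsum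
      _ ≤ ∑' n : ℕ, ((n:ℝ)+2) ^ (-(2:ℝ)) := Summable.tsum_le_tsum hterm hnsum summable_plus2
      _ ≤ 3/4 := tsum_plus2_le
  have h1 : (1:ℝ) - ‖riemannZeta w - 1‖ ≤ ‖riemannZeta w‖ := by
    have h2 := norm_sub_norm_le (1:ℂ) (1 - riemannZeta w)
    rw [norm_one, sub_sub_cancel, norm_sub_rev] at h2
    linarith
  linarith




lemma re_ge_of_mem_closedBall {w z : ℂ} (hz : z ∈ closedBall w (1/4)) :
    w.re - 1/4 ≤ z.re := by
  have h := Complex.abs_re_le_norm (z - w)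
  rw [mem_closedBall, dist_eq_norm] at hz
  rw [Complex.sub_re] at h
  have : |z.re - w.re| ≤ 1/4 := le_trans h hz
  have := abs_le.mp this
  linarith [this.1]

lemma zeta_deriv_le (w : ℂ) (hw : w.re = 2) : ‖deriv riemannZeta w‖ ≤ 4 * Zc := by
  have hball : DiffContOnCl ℂ riemannZeta (ball w (1/4)) := by
    apply DifferentiableOn.diffContOnCl
    rw [closure_ball w (by norm_num : (1/4:ℝ) ≠ 0)]
    intro z hz
    have hre := re_ge_of_mem_closedBall hz
    rw [hw] at hre
    have hz1 : z ≠ 1 := by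
      intro h; rw [h] at hre; simp at hre; linarith
    exact (differentiableAt_riemannZeta hz1).differentiableWithinAt
  have hb := Complex.norm_deriv_le_of_forall_mem_sphere_norm_le (by norm_num : (0:ℝ) < 1/4)
    hball (fun z hz => by
      apply zeta_norm_le
      have : z ∈ closedBall w (1/4) := sphere_subset_closedBall hz
      have hre := re_ge_of_mem_closedBall this
      rw [hw] at hre
      linarith)
  calc ‖deriv riemannZeta w‖ ≤ Zc / (1/4) := hb
    _ = 4 * Zc := by ring

lemma derivZeta_contAt {w : ℂ} (hw : w ≠ 1) : ContinuousAt (deriv riemannZeta) w := by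
  have hdiff : DifferentiableOn ℂ riemannZeta {(1:ℂ)}ᶜ :=
    fun z hz => (differentiableAt_riemannZeta hz).differentiableWithinAt
  have han : AnalyticOnNhd ℂ riemannZeta {(1:ℂ)}ᶜ :=
    hdiff.analyticOnNhd isOpen_compl_singleton
  exact (han.deriv w hw).continuousAt

lemma isOpen_im_ne : IsOpen {s : ℂ | s.im ≠ 0} :=
  isOpen_compl_singleton.preimage Complex.continuous_im

lemma X1_diffAt {s : ℂ} (hs : s.im ≠ 0) : DifferentiableAt ℂ X1 s := by
  have h2pi : ((2:ℂ) * (Real.pi:ℂ)) ≠ 0 := by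
    simp [Complex.ext_iff, Real.pi_ne_zero]
  have hG : DifferentiableAt ℂ Complex.Gamma s := by
    apply Complex.differentiableAt_Gamma
    intro m
    intro h
    rw [h] at hs
    simp at hs
  have hcp : DifferentiableAt ℂ (fun y : ℂ => (2*(Real.pi:ℂ))^(-y)) s :=
    DifferentiableAt.const_cpow (differentiable_id.neg).differentiableAt (Or.inl h2pi)
  have hcos : DifferentiableAt ℂ (fun y : ℂ => Complex.cos ((Real.pi:ℂ)*y/2)) s :=
    (Complex.differentiable_cos.differentiableAt).comp s
      (((differentiableAt_id).const_mul _).div_const _)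
  exact ((hcp.const_mul 2).mul hG).mul hcos

lemma derivX1_contAt {s : ℂ} (hs : s.im ≠ 0) : ContinuousAt (deriv X1) s := by
  have hdiff : DifferentiableOn ℂ X1 {s : ℂ | s.im ≠ 0} :=
    fun z hz => (X1_diffAt hz).differentiableWithinAt
  have han : AnalyticOnNhd ℂ X1 _ := hdiff.analyticOnNhd isOpen_im_ne
  exact (han.deriv s hs).continuousAt




lemma FE (s : ℂ) (hs : s.im ≠ 0) : riemannZeta (1 - s) = X1 s * riemannZeta s := by
  rw [riemannZeta_one_sub (fun n => by intro h; rw [h] at hs; simp at hs)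
    (by intro h; rw [h] at hs; simp at hs), X1]

lemma FE_deriv (s : ℂ) (hs : 0 < s.im) :
    deriv riemannZeta (1 - s) * (-1)
      = deriv X1 s * riemannZeta s + X1 s * deriv riemannZeta s := by
  have hsne : s.im ≠ 0 := hs.ne'
  have hs1 : (1:ℂ) - s ≠ 1 := by
    intro h
    have : s = 0 := by linear_combination -h
    rw [this] at hs; simp at hs
  have hsne1 : s ≠ 1 := by intro h; rw [h] at hsne; simp at hsne
  have hζ1 : DifferentiableAt ℂ riemannZeta (1 - s) := differentiableAt_riemannZeta hs1
  have hζ : DifferentiableAt ℂ riemannZeta s := differentiableAt_riemannZeta hsne1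
  have hX : DifferentiableAt ℂ X1 s := X1_diffAt hsne
  have hinner : HasDerivAt (fun z : ℂ => 1 - z) (-1) s := by
    simpa using (hasDerivAt_id s).const_sub 1
  have hL : HasDerivAt (fun z : ℂ => riemannZeta (1 - z)) (deriv riemannZeta (1 - s) * (-1)) s := by
    have := HasDerivAt.comp s (hζ1.hasDerivAt) hinner
    exact this
  have ev : (fun z : ℂ => riemannZeta (1 - z)) =ᶠ[nhds s] (fun z => X1 z * riemannZeta z) := by
    filter_upwards [(isOpen_lt continuous_const Complex.continuous_im).mem_nhds
      (show (0:ℝ) < s.im from hs)] with z hz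
    exact FE z (ne_of_gt hz)
  have hL' : HasDerivAt (fun z => X1 z * riemannZeta z) (deriv riemannZeta (1 - s) * (-1)) s :=
    hL.congr_of_eventuallyEq ev.symm
  have hR : HasDerivAt (fun z => X1 z * riemannZeta z)
      (deriv X1 s * riemannZeta s + X1 s * deriv riemannZeta s) s :=
    (hX.hasDerivAt).mul (hζ.hasDerivAt)
  exact hL'.unique hR



-- ### Main assembly auxiliary definitions

def sline (t : ℝ) : ℂ := -1 + (t : ℝ) * Complex.I

def Pxi (ξ : ℝ) (t : ℝ) : ℂ := (ξ : ℂ) ^ (-(sline t))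

def G1 (ξ : ℝ) (t : ℝ) : ℂ :=
  -(deriv riemannZeta (1 - sline t) * X1 (sline t) / riemannZeta (1 - sline t)) * Pxi ξ t
    * Complex.I

def FF (ξ : ℝ) (t : ℝ) : ℂ := X1 (sline t) * Pxi ξ t

def FD (ξ : ℝ) (t : ℝ) : ℂ :=
  deriv X1 (sline t) * Complex.I * Pxi ξ t
    - X1 (sline t) * Pxi ξ t * ((Real.log ξ : ℂ) * Complex.I)

def Glog (ξ : ℝ) (t : ℝ) : ℂ := X1 (sline t) * Pxi ξ t * ((Real.log ξ : ℂ) * Complex.I)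

lemma sline_im (t : ℝ) : (sline t).im = t := by simp [sline]

lemma one_sub_sline_re (t : ℝ) : (1 - sline t).re = 2 := by simp [sline]; norm_num

lemma one_sub_sline_im (t : ℝ) : (1 - sline t).im = -t := by simp [sline]

lemma one_sub_sline_ne_one (t : ℝ) (ht : t ≠ 0) : (1 : ℂ) - sline t ≠ 1 := by
  intro h
  have := congrArg Complex.im h
  rw [one_sub_sline_im] at this
  simp at this
  exact ht this

lemma sline_eq (t : ℝ) : (1 : ℂ) - sline t = 2 - t * Complex.I := by
  rw [sline]; ring

lemma Pxi_eq (ξ : ℝ) (hξ : 0 < ξ) (t : ℝ) :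
    Pxi ξ t = Complex.exp (((Real.log ξ : ℝ) : ℂ) * (-(sline t))) := by
  rw [Pxi, Complex.cpow_def_of_ne_zero (by exact_mod_cast hξ.ne' : (ξ:ℂ) ≠ 0),
    ← Complex.ofReal_log hξ.le]

lemma Pxi_cont (ξ : ℝ) (hξ : 0 < ξ) : Continuous (Pxi ξ) := by
  have : Pxi ξ = fun t => Complex.exp (((Real.log ξ : ℝ) : ℂ) * (-(sline t))) :=
    funext fun t => Pxi_eq ξ hξ t
  rw [this]
  apply Complex.continuous_exp.comp
  apply Continuous.mul continuous_const
  apply Continuous.neg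
  unfold sline
  continuity

lemma sline_cont : Continuous sline := by unfold sline; continuity

lemma Pxi_norm (ξ : ℝ) (hξ : 0 < ξ) (t : ℝ) : ‖Pxi ξ t‖ = ξ := by
  rw [Pxi, Complex.norm_cpow_eq_rpow_re_of_pos hξ]
  have : (-(sline t)).re = 1 := by simp [sline]
  rw [this, Real.rpow_one]

lemma zeta_one_sub_sline_ne (t : ℝ) : riemannZeta (1 - sline t) ≠ 0 := by
  have := zeta_lower (1 - sline t) (one_sub_sline_re t)
  intro h
  rw [h] at this
  norm_num at this

/-- The pointwise rewrite of the integrand. -/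
lemma integrand_eq (ξ : ℝ) (hξ : 0 < ξ) (t : ℝ) (ht : 1 ≤ t) :
    (deriv riemannZeta (sline t) / riemannZeta (sline t)) * (ξ : ℂ) ^ (-(sline t))
        * X1 (sline t) * Complex.I
      = G1 ξ t - FD ξ t - Glog ξ t := by
  have him : 0 < (sline t).im := by rw [sline_im]; linarith
  have hfe : riemannZeta (1 - sline t) = X1 (sline t) * riemannZeta (sline t) :=
    FE (sline t) him.ne'
  have hfd := FE_deriv (sline t) him
  have hwne : riemannZeta (1 - sline t) ≠ 0 := zeta_one_sub_sline_ne t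
  have hzne : riemannZeta (sline t) ≠ 0 := by
    intro h; rw [hfe, h, mul_zero] at hwne; exact hwne rfl
  have hxne : X1 (sline t) ≠ 0 := by
    intro h; rw [hfe, h, zero_mul] at hwne; exact hwne rfl
  have hb : deriv riemannZeta (1 - sline t)
      = -(deriv X1 (sline t) * riemannZeta (sline t)
          + X1 (sline t) * deriv riemannZeta (sline t)) := by
    linear_combination -hfd
  rw [G1, FD, Glog, hb, hfe]
  simp only [Pxi]
  field_simp
  ring

/-- Derivative of `FF`. -/
lemma FF_hasDeriv (ξ : ℝ) (hξ : 0 < ξ) (t : ℝ) (ht : t ≠ 0) :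
    HasDerivAt (FF ξ) (FD ξ t) t := by
  set L : ℂ := ((Real.log ξ : ℝ) : ℂ)
  have him : (sline t).im ≠ 0 := by rw [sline_im]; exact ht
  -- derivative of t ↦ X1 (sline t)
  have hinner : HasDerivAt (fun z : ℂ => -1 + z * Complex.I) Complex.I ((t : ℝ) : ℂ) := by
    simpa using ((hasDerivAt_id ((t:ℝ):ℂ)).mul_const Complex.I).const_add (-1)
  have houter : HasDerivAt (fun z : ℂ => X1 (-1 + z * Complex.I))
      (deriv X1 (sline t) * Complex.I) ((t : ℝ) : ℂ) := by
    have hX : HasDerivAt X1 (deriv X1 (sline t)) (-1 + ((t:ℝ):ℂ) * Complex.I) :=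
      (X1_diffAt him).hasDerivAt
    have := HasDerivAt.comp ((t:ℝ):ℂ) hX hinner
    exact this
  have hX1t : HasDerivAt (fun u : ℝ => X1 (sline u)) (deriv X1 (sline t) * Complex.I) t := by
    have := houter.comp_ofReal
    simpa [sline] using this
  -- derivative of Pxi
  have hlin : HasDerivAt (fun u : ℝ => L * (-(sline u))) (L * (-Complex.I)) t := by
    have h1 : HasDerivAt (fun u : ℝ => ((u:ℝ):ℂ)) 1 t := by
      simpa using (hasDerivAt_id t).ofReal_comp
    have h2 : HasDerivAt (fun u : ℝ => -(sline u)) (-Complex.I) t := by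
      unfold sline
      exact (((h1.mul_const Complex.I).const_add (-1)).neg).congr_deriv (by simp)
    simpa using h2.const_mul L
  have hPt : HasDerivAt (Pxi ξ) (Pxi ξ t * (L * (-Complex.I))) t := by
    have := hlin.cexp
    have heq : (fun u : ℝ => Complex.exp (L * (-(sline u)))) = Pxi ξ :=
      funext fun u => (Pxi_eq ξ hξ u).symm
    rw [heq] at this
    rwa [Pxi_eq ξ hξ t]
  have := hX1t.mul hPt
  refine this.congr_deriv ?_
  rw [FD]
  ring

-- ### Continuity lemmas on the relevant region

lemma contAt_G1 (ξ : ℝ) (hξ : 0 < ξ) (t : ℝ) (ht : 1 ≤ t) : ContinuousAt (G1 ξ) t := by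
  have ht0 : t ≠ 0 := by intro h; rw [h] at ht; linarith
  have him : (sline t).im ≠ 0 := by rw [sline_im]; exact ht0
  have hcs : ContinuousAt sline t := sline_cont.continuousAt
  have hcs1 : ContinuousAt (fun u : ℝ => 1 - sline u) t :=
    (continuous_const.sub sline_cont).continuousAt
  have h1 : ContinuousAt (fun u : ℝ => deriv riemannZeta (1 - sline u)) t :=
    ContinuousAt.comp (g := deriv riemannZeta) (f := fun u : ℝ => 1 - sline u)
      (derivZeta_contAt (one_sub_sline_ne_one t ht0)) hcs1
  have h2 : ContinuousAt (fun u : ℝ => X1 (sline u)) t :=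
    ((X1_diffAt him).continuousAt).comp hcs
  have h3 : ContinuousAt (fun u : ℝ => riemannZeta (1 - sline u)) t :=
    ContinuousAt.comp (g := riemannZeta) (f := fun u : ℝ => 1 - sline u)
      ((differentiableAt_riemannZeta (one_sub_sline_ne_one t ht0)).continuousAt) hcs1
  exact ((((h1.mul h2).div h3 (zeta_one_sub_sline_ne t)).neg.mul
    (Pxi_cont ξ hξ).continuousAt).mul continuousAt_const)

lemma contAt_FD (ξ : ℝ) (hξ : 0 < ξ) (t : ℝ) (ht : 1 ≤ t) : ContinuousAt (FD ξ) t := by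
  have ht0 : t ≠ 0 := by intro h; rw [h] at ht; linarith
  have him : (sline t).im ≠ 0 := by rw [sline_im]; exact ht0
  have hcs : ContinuousAt sline t := sline_cont.continuousAt
  have h1 : ContinuousAt (fun u : ℝ => deriv X1 (sline u)) t :=
    (derivX1_contAt him).comp hcs
  have h2 : ContinuousAt (fun u : ℝ => X1 (sline u)) t :=
    ((X1_diffAt him).continuousAt).comp hcs
  exact ((h1.mul continuousAt_const).mul (Pxi_cont ξ hξ).continuousAt).sub
    ((h2.mul (Pxi_cont ξ hξ).continuousAt).mul continuousAt_const)

lemma contAt_Glog (ξ : ℝ) (hξ : 0 < ξ) (t : ℝ) (ht : 1 ≤ t) : ContinuousAt (Glog ξ) t := by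
  have ht0 : t ≠ 0 := by intro h; rw [h] at ht; linarith
  have him : (sline t).im ≠ 0 := by rw [sline_im]; exact ht0
  have h2 : ContinuousAt (fun u : ℝ => X1 (sline u)) t :=
    ((X1_diffAt him).continuousAt).comp sline_cont.continuousAt
  exact (h2.mul (Pxi_cont ξ hξ).continuousAt).mul continuousAt_const

-- ### Norm bounds

lemma G1_norm_le (ξ : ℝ) (hξ : 0 < ξ) (t : ℝ) (ht : 1 ≤ t) :
    ‖G1 ξ t‖ ≤ 64 * Real.pi ^ 2 * Zc * ξ * t ^ (-((3:ℝ)/2)) := by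
  have hX1 : ‖X1 (sline t)‖ ≤ 4 * Real.pi ^ 2 * t ^ (-((3:ℝ)/2)) := by
    have := X1_norm_le t ht
    simpa [sline] using this
  have hb : ‖deriv riemannZeta (1 - sline t)‖ ≤ 4 * Zc :=
    zeta_deriv_le _ (one_sub_sline_re t)
  have hw : (1/4 : ℝ) ≤ ‖riemannZeta (1 - sline t)‖ := zeta_lower _ (one_sub_sline_re t)
  have hnorm : ‖G1 ξ t‖ = ‖deriv riemannZeta (1 - sline t)‖ * ‖X1 (sline t)‖
      / ‖riemannZeta (1 - sline t)‖ * ξ := by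
    rw [G1, norm_mul, norm_mul, norm_neg, norm_div, norm_mul, Complex.norm_I, mul_one,
      Pxi_norm ξ hξ]
  rw [hnorm]
  have hZc : (0:ℝ) ≤ Zc := Zc_nonneg
  calc ‖deriv riemannZeta (1 - sline t)‖ * ‖X1 (sline t)‖ / ‖riemannZeta (1 - sline t)‖ * ξ
      ≤ (4 * Zc) * (4 * Real.pi ^ 2 * t ^ (-((3:ℝ)/2))) / (1/4) * ξ := by
        gcongr
    _ = 64 * Real.pi ^ 2 * Zc * ξ * t ^ (-((3:ℝ)/2)) := by ring

lemma Glog_norm_le (ξ : ℝ) (hξ : 0 < ξ) (t : ℝ) (ht : 1 ≤ t) :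
    ‖Glog ξ t‖ ≤ 4 * Real.pi ^ 2 * ξ * |Real.log ξ| * t ^ (-((3:ℝ)/2)) := by
  have hX1 : ‖X1 (sline t)‖ ≤ 4 * Real.pi ^ 2 * t ^ (-((3:ℝ)/2)) := by
    have := X1_norm_le t ht
    simpa [sline] using this
  have hnorm : ‖Glog ξ t‖ = ‖X1 (sline t)‖ * ξ * |Real.log ξ| := by
    rw [Glog, norm_mul, norm_mul, norm_mul, Complex.norm_I, mul_one, Pxi_norm ξ hξ,
      Complex.norm_real, Real.norm_eq_abs]
  rw [hnorm]
  calc ‖X1 (sline t)‖ * ξ * |Real.log ξ|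
      ≤ (4 * Real.pi ^ 2 * t ^ (-((3:ℝ)/2))) * ξ * |Real.log ξ| := by
        gcongr
    _ = 4 * Real.pi ^ 2 * ξ * |Real.log ξ| * t ^ (-((3:ℝ)/2)) := by ring

lemma FF_norm_le (ξ : ℝ) (hξ : 0 < ξ) (t : ℝ) (ht : 1 ≤ t) :
    ‖FF ξ t‖ ≤ 4 * Real.pi ^ 2 * ξ := by
  have hX1 : ‖X1 (sline t)‖ ≤ 4 * Real.pi ^ 2 * t ^ (-((3:ℝ)/2)) := by
    have := X1_norm_le t ht
    simpa [sline] using this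
  have hpow : t ^ (-((3:ℝ)/2)) ≤ 1 :=
    Real.rpow_le_one_of_one_le_of_nonpos ht (by norm_num)
  have : ‖FF ξ t‖ = ‖X1 (sline t)‖ * ξ := by
    rw [FF, norm_mul, Pxi_norm ξ hξ]
  rw [this]
  calc ‖X1 (sline t)‖ * ξ ≤ (4 * Real.pi ^ 2 * t ^ (-((3:ℝ)/2))) * ξ := by gcongr
    _ ≤ (4 * Real.pi ^ 2 * 1) * ξ := by
        gcongr
    _ = 4 * Real.pi ^ 2 * ξ := by ring

lemma integral_rpow_le (T : ℝ) (hT : 1 ≤ T) :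
    |∫ t in (1:ℝ)..T, t ^ (-((3:ℝ)/2))| ≤ 2 := by
  have h0 : (0:ℝ) ∉ Set.uIcc (1:ℝ) T := by
    rw [Set.uIcc_of_le hT]
    intro h
    exact absurd h.1 (by norm_num)
  rw [integral_rpow (Or.inr ⟨by norm_num, h0⟩)]
  have hTpow : (0:ℝ) < T ^ (-((3:ℝ)/2) + 1) := Real.rpow_pos_of_pos (by linarith) _
  have hTpow1 : T ^ (-((3:ℝ)/2) + 1) ≤ 1 := by
    apply Real.rpow_le_one_of_one_le_of_nonpos hT
    norm_num
  have h1 : (1:ℝ) ^ (-((3:ℝ)/2) + 1) = 1 := Real.one_rpow _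
  rw [h1]
  rw [abs_div]
  rw [abs_of_nonpos (by linarith), abs_of_nonpos (by norm_num)]
  rw [div_le_iff₀ (by norm_num)]
  norm_num
  linarith

-- ### The main theorem

/-- For `ξ > 0` and `T ≥ 100`, the integral
`I₃ := -(1/(2πi)) ∫_{-1+i}^{-1+iT} (ζ'/ζ)(s) ξ^{-s} 𝒳(1-s) ds` satisfies `I₃ ≪_ξ 1`. -/
theorem I3_estimate (ξ : ℝ) (hξ : 0 < ξ) :
    ∃ C : ℝ, 0 < C ∧ ∀ T : ℝ, 100 ≤ T →
      ‖-((2 * Real.pi * Complex.I)⁻¹ *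
          ∫ t in (1:ℝ)..T,
            (deriv riemannZeta (-1 + t * Complex.I) / riemannZeta (-1 + t * Complex.I)) *
              (ξ : ℂ) ^ (-(-1 + t * Complex.I)) * X1 (-1 + t * Complex.I) * Complex.I)‖
      ≤ C := by
  set L := Real.log ξ with hL
  refine ⟨128 * Real.pi ^ 2 * Zc * ξ + 8 * Real.pi ^ 2 * ξ
    + 8 * Real.pi ^ 2 * ξ * |L| + 1, ?_, ?_⟩
  · have h1 : (0:ℝ) ≤ 128 * Real.pi ^ 2 * Zc * ξ :=
      mul_nonneg (mul_nonneg (by positivity) Zc_nonneg) hξ.le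
    have h2 : (0:ℝ) ≤ 8 * Real.pi ^ 2 * ξ := by positivity
    have h3 : (0:ℝ) ≤ 8 * Real.pi ^ 2 * ξ * |L| := by positivity
    linarith
  intro T hT
  have hT1 : (1:ℝ) ≤ T := by linarith
  have huIcc : Set.uIcc (1:ℝ) T = Set.Icc 1 T := Set.uIcc_of_le hT1
  have hmem : ∀ t ∈ Set.uIcc (1:ℝ) T, 1 ≤ t := by
    rw [huIcc]; exact fun t ht => ht.1
  -- rewrite the integrand
  have hcongr : (∫ t in (1:ℝ)..T,
        (deriv riemannZeta (-1 + t * Complex.I) / riemannZeta (-1 + t * Complex.I)) *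
          (ξ : ℂ) ^ (-(-1 + t * Complex.I)) * X1 (-1 + t * Complex.I) * Complex.I)
      = ∫ t in (1:ℝ)..T, (G1 ξ t - FD ξ t - Glog ξ t) := by
    apply intervalIntegral.integral_congr
    intro t ht
    exact integrand_eq ξ hξ t (hmem t ht)
  -- integrability
  have hiG1 : IntervalIntegrable (G1 ξ) MeasureTheory.volume 1 T := by
    apply ContinuousOn.intervalIntegrable
    exact fun t ht => (contAt_G1 ξ hξ t (hmem t ht)).continuousWithinAt
  have hiFD : IntervalIntegrable (FD ξ) MeasureTheory.volume 1 T := by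
    apply ContinuousOn.intervalIntegrable
    exact fun t ht => (contAt_FD ξ hξ t (hmem t ht)).continuousWithinAt
  have hiGlog : IntervalIntegrable (Glog ξ) MeasureTheory.volume 1 T := by
    apply ContinuousOn.intervalIntegrable
    exact fun t ht => (contAt_Glog ξ hξ t (hmem t ht)).continuousWithinAt
  have hsplit : (∫ t in (1:ℝ)..T, (G1 ξ t - FD ξ t - Glog ξ t))
      = (∫ t in (1:ℝ)..T, G1 ξ t) - (∫ t in (1:ℝ)..T, FD ξ t)
        - (∫ t in (1:ℝ)..T, Glog ξ t) := by
    rw [intervalIntegral.integral_sub (hiG1.sub hiFD) hiGlog,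
      intervalIntegral.integral_sub hiG1 hiFD]
  -- FTC for FD
  have hFTC : (∫ t in (1:ℝ)..T, FD ξ t) = FF ξ T - FF ξ 1 := by
    apply intervalIntegral.integral_eq_sub_of_hasDerivAt
    · intro t ht
      have ht1 : 1 ≤ t := hmem t ht
      exact FF_hasDeriv ξ hξ t (by linarith)
    · exact hiFD
  -- integrable bound function
  have hipow : IntervalIntegrable (fun t : ℝ => t ^ (-((3:ℝ)/2))) MeasureTheory.volume 1 T := by
    apply ContinuousOn.intervalIntegrable
    intro t ht
    have ht1 : 1 ≤ t := hmem t ht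
    exact (Real.continuousAt_rpow_const t _ (Or.inl (by linarith))).continuousWithinAt
  have hrpow_int := integral_rpow_le T hT1
  -- bound on ∫ G1
  have hbG1 : ‖∫ t in (1:ℝ)..T, G1 ξ t‖ ≤ 128 * Real.pi ^ 2 * Zc * ξ := by
    have hb : ‖∫ t in (1:ℝ)..T, G1 ξ t‖
        ≤ |∫ t in (1:ℝ)..T, 64 * Real.pi ^ 2 * Zc * ξ * t ^ (-((3:ℝ)/2))| := by
      apply intervalIntegral.norm_integral_le_abs_of_norm_le
      · filter_upwards [MeasureTheory.ae_restrict_mem measurableSet_Ioc] with t ht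
        have ht1 : 1 ≤ t := by
          rw [Set.uIoc_of_le hT1] at ht
          exact ht.1.le
        exact G1_norm_le ξ hξ t ht1
      · exact hipow.const_mul _
    rw [intervalIntegral.integral_const_mul, abs_mul] at hb
    have hconst : |64 * Real.pi ^ 2 * Zc * ξ| = 64 * Real.pi ^ 2 * Zc * ξ := by
      apply _root_.abs_of_nonneg
      exact mul_nonneg (mul_nonneg (by positivity) Zc_nonneg) hξ.le
    rw [hconst] at hb
    calc ‖∫ t in (1:ℝ)..T, G1 ξ t‖
        ≤ 64 * Real.pi ^ 2 * Zc * ξ * |∫ t in (1:ℝ)..T, t ^ (-((3:ℝ)/2))| := hb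
      _ ≤ 64 * Real.pi ^ 2 * Zc * ξ * 2 := by
          apply mul_le_mul_of_nonneg_left hrpow_int
          exact mul_nonneg (mul_nonneg (by positivity) Zc_nonneg) hξ.le
      _ = 128 * Real.pi ^ 2 * Zc * ξ := by ring
  -- bound on ∫ Glog
  have hbGlog : ‖∫ t in (1:ℝ)..T, Glog ξ t‖ ≤ 8 * Real.pi ^ 2 * ξ * |L| := by
    have hb : ‖∫ t in (1:ℝ)..T, Glog ξ t‖
        ≤ |∫ t in (1:ℝ)..T, 4 * Real.pi ^ 2 * ξ * |L| * t ^ (-((3:ℝ)/2))| := by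
      apply intervalIntegral.norm_integral_le_abs_of_norm_le
      · filter_upwards [MeasureTheory.ae_restrict_mem measurableSet_Ioc] with t ht
        have ht1 : 1 ≤ t := by
          rw [Set.uIoc_of_le hT1] at ht
          exact ht.1.le
        exact Glog_norm_le ξ hξ t ht1
      · exact hipow.const_mul _
    rw [intervalIntegral.integral_const_mul, abs_mul] at hb
    have hconst : _root_.abs (4 * Real.pi ^ 2 * ξ * |L|) = 4 * Real.pi ^ 2 * ξ * |L| :=
      _root_.abs_of_nonneg (by positivity)
    rw [hconst] at hb
    calc ‖∫ t in (1:ℝ)..T, Glog ξ t‖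
        ≤ 4 * Real.pi ^ 2 * ξ * |L| * |∫ t in (1:ℝ)..T, t ^ (-((3:ℝ)/2))| := hb
      _ ≤ 4 * Real.pi ^ 2 * ξ * |L| * 2 := by
          apply mul_le_mul_of_nonneg_left hrpow_int (by positivity)
      _ = 8 * Real.pi ^ 2 * ξ * |L| := by ring
  -- bound on ∫ FD
  have hbFD : ‖∫ t in (1:ℝ)..T, FD ξ t‖ ≤ 8 * Real.pi ^ 2 * ξ := by
    rw [hFTC]
    calc ‖FF ξ T - FF ξ 1‖ ≤ ‖FF ξ T‖ + ‖FF ξ 1‖ := norm_sub_le _ _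
      _ ≤ 4 * Real.pi ^ 2 * ξ + 4 * Real.pi ^ 2 * ξ :=
          add_le_add (FF_norm_le ξ hξ T hT1) (FF_norm_le ξ hξ 1 le_rfl)
      _ = 8 * Real.pi ^ 2 * ξ := by ring
  -- assemble
  have htot : ‖∫ t in (1:ℝ)..T,
        (deriv riemannZeta (-1 + t * Complex.I) / riemannZeta (-1 + t * Complex.I)) *
          (ξ : ℂ) ^ (-(-1 + t * Complex.I)) * X1 (-1 + t * Complex.I) * Complex.I‖
      ≤ 128 * Real.pi ^ 2 * Zc * ξ + 8 * Real.pi ^ 2 * ξ + 8 * Real.pi ^ 2 * ξ * |L| := by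
    rw [hcongr, hsplit]
    calc ‖(∫ t in (1:ℝ)..T, G1 ξ t) - (∫ t in (1:ℝ)..T, FD ξ t)
          - (∫ t in (1:ℝ)..T, Glog ξ t)‖
        ≤ ‖(∫ t in (1:ℝ)..T, G1 ξ t) - (∫ t in (1:ℝ)..T, FD ξ t)‖
          + ‖∫ t in (1:ℝ)..T, Glog ξ t‖ := norm_sub_le _ _
      _ ≤ ‖∫ t in (1:ℝ)..T, G1 ξ t‖ + ‖∫ t in (1:ℝ)..T, FD ξ t‖
          + ‖∫ t in (1:ℝ)..T, Glog ξ t‖ := by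
          have := norm_sub_le (∫ t in (1:ℝ)..T, G1 ξ t) (∫ t in (1:ℝ)..T, FD ξ t)
          linarith
      _ ≤ _ := by
          have := hbG1; have := hbFD; have := hbGlog
          linarith
  rw [norm_neg, norm_mul]
  have hfac : ‖((2:ℂ) * Real.pi * Complex.I)⁻¹‖ ≤ 1 := by
    rw [norm_inv]
    have : ‖(2:ℂ) * Real.pi * Complex.I‖ = 2 * Real.pi := by
      rw [norm_mul, norm_mul, Complex.norm_I, mul_one, Complex.norm_real, Real.norm_eq_abs,
        abs_of_pos Real.pi_pos]
      norm_num
    rw [this]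
    rw [inv_le_one_iff₀]
    right
    linarith [Real.pi_gt_three]
  have hnn : (0:ℝ) ≤ ‖∫ t in (1:ℝ)..T,
        (deriv riemannZeta (-1 + t * Complex.I) / riemannZeta (-1 + t * Complex.I)) *
          (ξ : ℂ) ^ (-(-1 + t * Complex.I)) * X1 (-1 + t * Complex.I) * Complex.I‖ :=
    norm_nonneg _
  calc ‖((2:ℂ) * Real.pi * Complex.I)⁻¹‖ * ‖∫ t in (1:ℝ)..T,
        (deriv riemannZeta (-1 + t * Complex.I) / riemannZeta (-1 + t * Complex.I)) *
          (ξ : ℂ) ^ (-(-1 + t * Complex.I)) * X1 (-1 + t * Complex.I) * Complex.I‖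
      ≤ 1 * (128 * Real.pi ^ 2 * Zc * ξ + 8 * Real.pi ^ 2 * ξ + 8 * Real.pi ^ 2 * ξ * |L|) := by
        apply mul_le_mul hfac htot hnn (by norm_num)
    _ ≤ 128 * Real.pi ^ 2 * Zc * ξ + 8 * Real.pi ^ 2 * ξ + 8 * Real.pi ^ 2 * ξ * |L| + 1 := by
        linarith
  
end
end

section
/- Assume that for every rational number ξ = m/q with 0<m<q and gcd(m,q)=1, every smooth compactly supported function B:(0,∞)→ℂ, and every ε>0, one has ∑_n Λ(n) e(-nξ) B(n/X) = (μ(q)/φ(q)) C_B X + O_{ξ,B,ε}(X^{1/2+ε}) as X→∞. Then for every primitive Dirichlet character χ of modulus q>1, every smooth compactly supported function B:(0,∞)→ℂ, and every ε>0, one has ∑_n Λ(n) χ(n) B(n/X) ≪_{q,B,ε} X^{1/2+ε} as X→∞. -/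
open Complex Filter Asymptotics Set

noncomputable section

-- auxiliary lemmas

lemma aux_factorsThrough_inv {n : ℕ} (χ : DirichletCharacter ℂ n) {d : ℕ}
    (h : χ.FactorsThrough d) : (χ⁻¹).FactorsThrough d := by
  obtain ⟨hd, χ₀, rfl⟩ := h
  exact ⟨hd, χ₀⁻¹, (map_inv _ _).symm⟩

lemma aux_isPrimitive_inv {n : ℕ} {χ : DirichletCharacter ℂ n} (h : χ.IsPrimitive) :
    (χ⁻¹).IsPrimitive := by
  have hset : (χ⁻¹).conductorSet = χ.conductorSet := by
    ext d
    constructor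
    · intro hd
      have := aux_factorsThrough_inv χ⁻¹ hd
      rwa [inv_inv] at this
    · exact fun hd => aux_factorsThrough_inv χ hd
  unfold DirichletCharacter.IsPrimitive DirichletCharacter.conductor at *
  rw [hset]
  exact h

lemma aux_finite_support {B : ℝ → ℂ} (hB : NiceTest B) (X : ℝ) (f : ℕ → ℂ) :
    (Function.support fun n : ℕ => f n * B (n / X)).Finite := by
  obtain ⟨M, hM⟩ := hB.2.1.isCompact.bddAbove
  refine Set.Finite.subset (Set.finite_Iic ⌈M * X⌉₊) ?_
  intro n hn
  have hB0 : B ((n : ℝ) / X) ≠ 0 := right_ne_zero_of_mul hn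
  have hmem : (n : ℝ) / X ∈ tsupport B := subset_tsupport B hB0
  have hpos : (0:ℝ) < (n : ℝ) / X := hB.2.2 hmem
  have hle : (n : ℝ) / X ≤ M := hM hmem
  have hX : 0 < X := by
    by_contra hX'
    push_neg at hX'
    have : (n : ℝ) / X ≤ 0 := div_nonpos_of_nonneg_of_nonpos (Nat.cast_nonneg n) hX'
    linarith
  have h1 : (n : ℝ) ≤ M * X := (div_le_iff₀ hX).mp hle
  have h2 : (n : ℝ) ≤ (⌈M * X⌉₊ : ℝ) := h1.trans (Nat.le_ceil _)
  exact Set.mem_Iic.mpr (by exact_mod_cast h2)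

lemma aux_stdAddChar_eq {q : ℕ} [NeZero q] (m : ZMod q) (n : ℕ) :
    ZMod.stdAddChar (-(m * (n : ZMod q))) = e (-((n:ℝ) * ((m.val : ℝ) / q))) := by
  have h1 : -(m * (n : ZMod q)) = ((-(m.val * n : ℤ) : ℤ) : ZMod q) := by
    push_cast [ZMod.natCast_zmod_val]
    ring
  rw [h1, ZMod.stdAddChar_coe]
  unfold e
  congr 1
  push_cast
  ring


/-- If for every rational `ξ = m/q` in lowest terms with `0 < m < q`, every smooth compactly
supported `B`, and every `ε > 0` one has
`∑_n Λ(n) e(-nξ) B(n/X) = (μ(q)/φ(q)) C_B X + O_{ξ,B,ε}(X^{1/2+ε})`,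
then for every primitive Dirichlet character `χ` of modulus `q > 1`, every such `B`, and
every `ε > 0`, one has `∑_n Λ(n) χ(n) B(n/X) ≪_{q,B,ε} X^{1/2+ε}`. -/
theorem primitive_char_bound_of_twist_asymptotic
    (H : ∀ m q : ℕ, 0 < m → m < q → Nat.Coprime m q →
      ∀ B : ℝ → ℂ, NiceTest B → ∀ ε : ℝ, 0 < ε →
        (fun X : ℝ =>
            (∑' n : ℕ,
              (ArithmeticFunction.vonMangoldt n : ℂ) * e (-(n * ((m : ℝ) / q))) * B (n / X))
              - (ArithmeticFunction.moebius q : ℂ) / (Nat.totient q : ℂ) * CB B * X)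
          =O[atTop] fun X : ℝ => X ^ ((1:ℝ)/2 + ε)) :
    ∀ q : ℕ, 1 < q → ∀ χ : DirichletCharacter ℂ q, χ.IsPrimitive →
    ∀ B : ℝ → ℂ, NiceTest B → ∀ ε : ℝ, 0 < ε →
      (fun X : ℝ => ∑' n : ℕ, (ArithmeticFunction.vonMangoldt n : ℂ) * χ n * B (n / X))
        =O[atTop] fun X : ℝ => X ^ ((1:ℝ)/2 + ε) := by
  intro q hq χ hχ B hB ε hε
  haveI : NeZero q := ⟨by omega⟩
  set c : ℂ := (ArithmeticFunction.moebius q : ℂ) / (Nat.totient q : ℂ) * CB B with hc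
  set g : ℂ := gaussSum χ⁻¹ ZMod.stdAddChar with hg
  -- χ is nontrivial
  have hχ1 : χ ≠ 1 := by
    intro h
    rw [h] at hχ
    unfold DirichletCharacter.IsPrimitive at hχ
    rw [DirichletCharacter.conductor_one] at hχ
    omega
  have hinv_ne : χ⁻¹ ≠ 1 := fun h => hχ1 (by rwa [inv_eq_one] at h)
  have hχinv : (χ⁻¹).IsPrimitive := aux_isPrimitive_inv hχ
  -- Gauss sum nonvanishing
  have hg_ne : g ≠ 0 := by
    intro hg0
    have hdft : ZMod.dft (⇑(χ⁻¹)) = ZMod.dft (0 : ZMod q → ℂ) := by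
      funext k
      rw [hχinv.fourierTransform_eq_inv_mul_gaussSum k, ← hg, hg0, mul_zero, map_zero]
      rfl
    have hzero : (⇑(χ⁻¹) : ZMod q → ℂ) = 0 := ZMod.dft.injective hdft
    have h1 : (χ⁻¹) (1 : ZMod q) = 1 := map_one _
    rw [show ((χ⁻¹) (1 : ZMod q)) = (0 : ℂ) from congrFun hzero 1] at h1
    exact one_ne_zero h1.symm
  have hχneg1_ne : χ (-1) ≠ 0 := by
    have h1 : χ (-1) * χ (-1) = 1 := by
      rw [← map_mul]
      norm_num
    exact left_ne_zero_of_mul_eq_one h1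
  -- key Fourier-expansion identity
  have key : ∀ k : ZMod q,
      ∑ m : ZMod q, χ⁻¹ m * ZMod.stdAddChar (-(m * k)) = χ (-1) * χ k * g := by
    intro k
    have h := hχinv.fourierTransform_eq_inv_mul_gaussSum k
    rw [ZMod.dft_apply] at h
    simp only [smul_eq_mul] at h
    calc ∑ m : ZMod q, χ⁻¹ m * ZMod.stdAddChar (-(m * k))
        = ∑ m : ZMod q, ZMod.stdAddChar (-(m * k)) * χ⁻¹ m :=
          Finset.sum_congr rfl fun _ _ => mul_comm _ _
      _ = χ⁻¹⁻¹ (-k) * g := h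
      _ = χ (-1) * χ k * g := by
          rw [inv_inv, show (-k : ZMod q) = (-1) * k by ring, map_mul]
  -- the inner twisted sums
  set S : ZMod q → ℝ → ℂ := fun m X =>
    ∑' n : ℕ, (ArithmeticFunction.vonMangoldt n : ℂ) *
      ZMod.stdAddChar (-(m * (n : ZMod q))) * B (n / X) with hS
  -- summability
  have hsummable : ∀ (m : ZMod q) (X : ℝ),
      Summable fun n : ℕ => χ⁻¹ m * ((ArithmeticFunction.vonMangoldt n : ℂ) *
        ZMod.stdAddChar (-(m * (n : ZMod q))) * B (n / X)) := by
    intro m X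
    have heq : (fun n : ℕ => χ⁻¹ m * ((ArithmeticFunction.vonMangoldt n : ℂ) *
        ZMod.stdAddChar (-(m * (n : ZMod q))) * B (n / X)))
        = fun n : ℕ => (χ⁻¹ m * ((ArithmeticFunction.vonMangoldt n : ℂ) *
          ZMod.stdAddChar (-(m * (n : ZMod q))))) * B (n / X) := by
      funext n; ring
    rw [heq]
    exact summable_of_finite_support (aux_finite_support hB X _)
  -- the main pointwise identity
  have main_eq : ∀ X : ℝ,
      (∑' n : ℕ, (ArithmeticFunction.vonMangoldt n : ℂ) * χ n * B (n / X)) * (χ (-1) * g)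
        = ∑ m : ZMod q, χ⁻¹ m * (S m X - c * X) := by
    intro X
    have step1 :
        (∑' n : ℕ, (ArithmeticFunction.vonMangoldt n : ℂ) * χ n * B (n / X)) * (χ (-1) * g)
          = ∑ m : ZMod q, χ⁻¹ m * S m X := by
      rw [← tsum_mul_right]
      have hper : ∀ n : ℕ,
          (ArithmeticFunction.vonMangoldt n : ℂ) * χ n * B (n / X) * (χ (-1) * g)
            = ∑ m : ZMod q, χ⁻¹ m * ((ArithmeticFunction.vonMangoldt n : ℂ) *
                ZMod.stdAddChar (-(m * (n : ZMod q))) * B (n / X)) := by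
        intro n
        have hk := key (n : ZMod q)
        calc (ArithmeticFunction.vonMangoldt n : ℂ) * χ n * B (n / X) * (χ (-1) * g)
            = ((ArithmeticFunction.vonMangoldt n : ℂ) * B (n / X)) *
              (χ (-1) * χ (n : ZMod q) * g) := by ring
          _ = ((ArithmeticFunction.vonMangoldt n : ℂ) * B (n / X)) *
              (∑ m : ZMod q, χ⁻¹ m * ZMod.stdAddChar (-(m * (n : ZMod q)))) := by rw [hk]
          _ = ∑ m : ZMod q, χ⁻¹ m * ((ArithmeticFunction.vonMangoldt n : ℂ) *
                ZMod.stdAddChar (-(m * (n : ZMod q))) * B (n / X)) := by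
              rw [Finset.mul_sum]
              exact Finset.sum_congr rfl fun m _ => by ring
      rw [tsum_congr hper, Summable.tsum_finsetSum (fun m _ => hsummable m X)]
      refine Finset.sum_congr rfl fun m _ => ?_
      rw [tsum_mul_left]
    rw [step1]
    have hzero : (∑ m : ZMod q, χ⁻¹ m) = 0 := MulChar.sum_eq_zero_of_ne_one hinv_ne
    calc ∑ m : ZMod q, χ⁻¹ m * S m X
        = ∑ m : ZMod q, (χ⁻¹ m * (S m X - c * X) + χ⁻¹ m * (c * X)) := by
          refine Finset.sum_congr rfl fun m _ => by ring
      _ = (∑ m : ZMod q, χ⁻¹ m * (S m X - c * X)) + (∑ m : ZMod q, χ⁻¹ m) * (c * X) := by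
          rw [Finset.sum_add_distrib, Finset.sum_mul]
      _ = ∑ m : ZMod q, χ⁻¹ m * (S m X - c * X) := by rw [hzero]; ring
  -- each term is O(X^{1/2+ε})
  have hO : ∀ m : ZMod q, (fun X : ℝ => χ⁻¹ m * (S m X - c * X))
      =O[atTop] fun X : ℝ => X ^ ((1:ℝ)/2 + ε) := by
    intro m
    by_cases hm : IsUnit m
    · have hcop : Nat.Coprime m.val q := by
        rw [← Nat.coprime_comm] at *
        rw [Nat.coprime_comm]
        have : IsUnit ((m.val : ℕ) : ZMod q) := by rwa [ZMod.natCast_zmod_val]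
        exact (ZMod.isUnit_iff_coprime m.val q).mp this
      haveI : Fact (1 < q) := ⟨hq⟩
      have hmne : m ≠ 0 := hm.ne_zero
      have hpos : 0 < m.val := by
        rcases Nat.eq_zero_or_pos m.val with h0 | h0
        · exact absurd ((ZMod.val_eq_zero m).mp h0) hmne
        · exact h0
      have hlt : m.val < q := ZMod.val_lt m
      have hH := H m.val q hpos hlt hcop B hB ε hε
      have heqS : ∀ X : ℝ, S m X - c * X
          = (∑' n : ℕ, (ArithmeticFunction.vonMangoldt n : ℂ) *
              e (-((n:ℝ) * ((m.val : ℝ) / q))) * B (n / X))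
            - (ArithmeticFunction.moebius q : ℂ) / (Nat.totient q : ℂ) * CB B * X := by
        intro X
        rw [hc, hS]
        congr 1
        exact tsum_congr fun n => by rw [aux_stdAddChar_eq]
      have : (fun X : ℝ => S m X - c * X) =O[atTop] fun X : ℝ => X ^ ((1:ℝ)/2 + ε) := by
        have hfun : (fun X : ℝ => S m X - c * X) = (fun X : ℝ =>
            (∑' n : ℕ, (ArithmeticFunction.vonMangoldt n : ℂ) *
              e (-((n:ℝ) * ((m.val : ℝ) / q))) * B (n / X))
            - (ArithmeticFunction.moebius q : ℂ) / (Nat.totient q : ℂ) * CB B * X) :=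
          funext heqS
        rw [hfun]
        exact hH
      exact this.const_mul_left _
    · have hzero : χ⁻¹ m = 0 := MulChar.map_nonunit _ hm
      simp only [hzero, zero_mul]
      exact isBigO_zero _ _
  -- combine
  have hsum : (fun X : ℝ => ∑ m : ZMod q, χ⁻¹ m * (S m X - c * X))
      =O[atTop] fun X : ℝ => X ^ ((1:ℝ)/2 + ε) :=
    Asymptotics.IsBigO.fun_sum fun m _ => hO m
  have hfinal : (fun X : ℝ => ∑' n : ℕ,
      (ArithmeticFunction.vonMangoldt n : ℂ) * χ n * B (n / X))
      = fun X : ℝ => (χ (-1) * g)⁻¹ * ∑ m : ZMod q, χ⁻¹ m * (S m X - c * X) := by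
    funext X
    rw [← main_eq X, mul_comm ((∑' n : ℕ, _) ) (χ (-1) * g), ← mul_assoc,
      inv_mul_cancel₀ (mul_ne_zero hχneg1_ne hg_ne), one_mul]
  rw [hfinal]
  exact hsum.const_mul_left _


end
end
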